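/- For fractionally integrated noise F(d) with d ∈ (0,1/2) and all integers 1 ≤ j ≤ k: a_j − a_{j,k} ≤ (−a_j) · exp( d · Σ_{m=0}^{j−1} 1/(k−d−m) ). -/

import Mathlib

open scoped BigOperators

/-- AR(∞) coefficients of fractionally integrated noise F(d):
`a_j = Γ(j-d)/(Γ(j+1)Γ(-d))` for `j ≥ 1` (and `a_0 = 1`). -/
noncomputable def fiAR (d : ℝ) (j : ℕ) : ℝ :=
  if j = 0 then 1
  else Real.Gamma ((j : ℝ) - d) / (Real.Gamma ((j : ℝ) + 1) * Real.Gamma (-d))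

/-- Signed Yule–Walker AR(k) coefficients of F(d), for `1 ≤ j ≤ k`:
`a_{j,k} = Γ(k+1)Γ(j-d)Γ(k-d-j+1)/(Γ(k-j+1)Γ(j+1)Γ(-d)Γ(k-d+1))`. -/
noncomputable def fiYW (d : ℝ) (j k : ℕ) : ℝ :=
  Real.Gamma ((k : ℝ) + 1) * Real.Gamma ((j : ℝ) - d) * Real.Gamma ((k : ℝ) - d - (j : ℝ) + 1) /
    (Real.Gamma ((k : ℝ) - (j : ℝ) + 1) * Real.Gamma ((j : ℝ) + 1) * Real.Gamma (-d) *
      Real.Gamma ((k : ℝ) - d + 1))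

/-! The Yule–Walker coefficient is the AR(∞) coefficient times the ratio
`∏_{m<j} (k-m)/(k-d-m)` of two falling products, which the functional equation of `Γ` produces.
Writing each factor as `1 + d/(k-d-m) ≤ exp (d/(k-d-m))` bounds the ratio by the exponential, and
`a_j - a_{j,k} = (-a_j)(ratio - 1)` with `-a_j > 0` then gives the claim. -/

open Finset

namespace Real

theorem Gamma_add_one_eq_mul_prod_sub {c : ℝ} {n : ℕ} (hc : 0 < c - n + 1) :
    Gamma (c + 1) = Gamma (c - n + 1) * ∏ m ∈ range n, (c - m) := by
  induction n with
  | zero => simp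
  | succ n ih =>
    push_cast at hc
    have hshift : c - ((n + 1 : ℕ) : ℝ) + 1 = c - n := by push_cast; ring
    rw [ih (by linarith), prod_range_succ, hshift, Gamma_add_one (by linarith)]
    ring

theorem Gamma_neg_of_neg_of_neg_one_lt {s : ℝ} (hs : s < 0) (hs' : -1 < s) : Gamma s < 0 := by
  have hrec := Gamma_add_one hs.ne
  have hpos := Gamma_pos_of_pos (by linarith : 0 < s + 1)
  nlinarith

end Real

theorem prod_sub_div_sub_le_exp {c d : ℝ} {n : ℕ} (hd : 0 ≤ d)
    (hc : ∀ m ∈ range n, 0 < c - d - m) :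
    ∏ m ∈ range n, (c - m) / (c - d - m) ≤ Real.exp (d * ∑ m ∈ range n, 1 / (c - d - m)) := by
  rw [mul_sum, Real.exp_sum]
  refine prod_le_prod (fun m hm => div_nonneg (by linarith [hc m hm]) (hc m hm).le) fun m hm => ?_
  have hfactor : (c - m) / (c - d - m) = d * (1 / (c - d - m)) + 1 := by
    field_simp [(hc m hm).ne']
    ring
  rw [hfactor]
  exact Real.add_one_le_exp _

theorem fiAR_neg {d : ℝ} {j : ℕ} (hd : 0 < d) (hd' : d < 1) (hj : j ≠ 0) : fiAR d j < 0 := by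
  have hj1 : (1 : ℝ) ≤ j := by exact_mod_cast Nat.one_le_iff_ne_zero.mpr hj
  rw [fiAR, if_neg hj]
  exact div_neg_of_pos_of_neg (Real.Gamma_pos_of_pos (by linarith))
    (mul_neg_of_pos_of_neg (Real.Gamma_pos_of_pos (by linarith))
      (Real.Gamma_neg_of_neg_of_neg_one_lt (by linarith) (by linarith)))

theorem fiYW_eq_fiAR_mul_prod {d : ℝ} {j k : ℕ} (hd : d < 1) (hj : 1 ≤ j) (hjk : j ≤ k) :
    fiYW d j k = fiAR d j * ∏ m ∈ range j, ((k : ℝ) - m) / (k - d - m) := by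
  have hjk' : (j : ℝ) ≤ k := by exact_mod_cast hjk
  have hk : 0 < Real.Gamma ((k : ℝ) - j + 1) := Real.Gamma_pos_of_pos (by linarith)
  have hkd : 0 < Real.Gamma ((k : ℝ) - d - j + 1) := Real.Gamma_pos_of_pos (by linarith)
  rw [fiYW, fiAR, if_neg (by omega), prod_div_distrib,
    Real.Gamma_add_one_eq_mul_prod_sub (c := (k : ℝ)) (n := j) (by linarith),
    Real.Gamma_add_one_eq_mul_prod_sub (c := (k : ℝ) - d) (n := j) (by linarith)]
  field_simp [hk.ne', hkd.ne']

/-- for F(d) with `d ∈ (0,1/2)` and `1 ≤ j ≤ k`,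
`a_j - a_{j,k} ≤ (-a_j) exp(d ∑_{m=0}^{j-1} 1/(k-d-m))`. -/
theorem fiYW_difference_exp_bound
    (d : ℝ) (hd : 0 < d) (hd' : d < 1 / 2)
    (j k : ℕ) (hj : 1 ≤ j) (hjk : j ≤ k) :
    fiAR d j - fiYW d j k ≤
      (-(fiAR d j)) * Real.exp (d * ∑ m ∈ Finset.range j, 1 / ((k : ℝ) - d - m)) := by
  have hjk' : (j : ℝ) ≤ k := by exact_mod_cast hjk
  have hratio := prod_sub_div_sub_le_exp (c := k) (n := j) hd.le fun m hm => by
    have : (m : ℝ) + 1 ≤ j := by exact_mod_cast mem_range.mp hm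
    linarith
  have ha := fiAR_neg hd (by linarith) (by omega : j ≠ 0)
  rw [fiYW_eq_fiAR_mul_prod (by linarith) hj hjk]
  set ratio := ∏ m ∈ range j, ((k : ℝ) - m) / (k - d - m)
  calc fiAR d j - fiAR d j * ratio = -fiAR d j * (ratio - 1) := by ring
    _ ≤ -fiAR d j * ratio := mul_le_mul_of_nonneg_left (by linarith) (by linarith)
    _ ≤ _ := mul_le_mul_of_nonneg_left hratio (by linarith)
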